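/- Let $(X,Y)$ be finitely supported random variables and let $Z = f(X)$ be a function of $X$. Let $U$ be jointly distributed with $(X,Y,Z)$ such that $X - (Z,Y) - U$ forms a Markov chain, $Z$ is independent of $U$, and $H(Y \mid Z, U) = 0$. Then $I(X;U) = I(X;Y) - I(Z;Y)$. -/
import Mathlib


open Finset

/-- Shannon entropy (base 2) of a pmf on a finite alphabet. -/
noncomputable def ent {α : Type*} [Fintype α] (p : α → ℝ) : ℝ :=
  ∑ a, -(p a * Real.logb 2 (p a))

/-- Mutual information (base 2) of a joint pmf on a product of finite alphabets. -/
noncomputable def mi {α β : Type*} [Fintype α] [Fintype β] (q : α × β → ℝ) : ℝ :=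
  ent (fun a => ∑ b, q (a, b)) + ent (fun b => ∑ a, q (a, b)) - ent q

/-- Joint pmf of `(Z,Y,U)` where `Z = f(X)` and `(X,Y,U) ∼ p`. -/
noncomputable def zjoint {α β γ ζ : Type*} [Fintype α] [DecidableEq ζ]
    (p : α × β × γ → ℝ) (f : α → ζ) : ζ × β × γ → ℝ :=
  fun w => ∑ x ∈ Finset.univ.filter (fun x => f x = w.1), p (x, w.2.1, w.2.2)

noncomputable def phi10 (t : ℝ) : ℝ := -(t * Real.logb 2 t)

lemma phi10_zero : phi10 0 = 0 := by simp [phi10]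

/-- conditional entropy as a sum of nonnegative terms -/
lemma condEnt_eq {ι κ : Type*} [Fintype ι] [Fintype κ] (r : ι → κ → ℝ) :
    (∑ i, ∑ k, phi10 (r i k)) - (∑ i, phi10 (∑ k, r i k))
      = ∑ i, ∑ k, r i k * (Real.logb 2 (∑ k', r i k') - Real.logb 2 (r i k)) := by
  rw [← Finset.sum_sub_distrib]
  refine Finset.sum_congr rfl fun i _ => ?_
  have h1 : phi10 (∑ k, r i k)
      = ∑ k, -(r i k * Real.logb 2 (∑ k', r i k')) := by
    simp only [phi10, Finset.sum_mul, ← Finset.sum_neg_distrib]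
  rw [h1, ← Finset.sum_sub_distrib]
  refine Finset.sum_congr rfl fun k _ => ?_
  simp only [phi10]; ring

lemma condEnt_term_nonneg {κ : Type*} [Fintype κ] (r : κ → ℝ) (h : ∀ k, 0 ≤ r k) (k : κ) :
    0 ≤ r k * (Real.logb 2 (∑ k', r k') - Real.logb 2 (r k)) := by
  rcases eq_or_lt_of_le (h k) with h0 | h0
  · simp [← h0]
  · apply mul_nonneg h0.le
    rw [sub_nonneg]
    exact Real.logb_le_logb_of_le (by norm_num) h0
      (Finset.single_le_sum (fun k _ => h k) (mem_univ k))

lemma det_of_condEnt_zero {ι κ : Type*} [Fintype ι] [Fintype κ] (r : ι → κ → ℝ)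
    (h : ∀ i k, 0 ≤ r i k)
    (hz : ∑ i, ∑ k, r i k * (Real.logb 2 (∑ k', r i k') - Real.logb 2 (r i k)) = 0) :
    ∀ i k k', 0 < r i k → 0 < r i k' → k = k' := by
  classical
  intro i k k' hk hk'
  by_contra hne
  have hterm : ∀ j ∈ (univ : Finset ι),
      ∑ k, r j k * (Real.logb 2 (∑ k', r j k') - Real.logb 2 (r j k)) = 0 := by
    refine (Finset.sum_eq_zero_iff_of_nonneg (fun j _ => ?_)).1 hz
    exact Finset.sum_nonneg fun k _ => condEnt_term_nonneg (r j) (h j) k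
  have hterm2 : r i k * (Real.logb 2 (∑ k', r i k') - Real.logb 2 (r i k)) = 0 :=
    (Finset.sum_eq_zero_iff_of_nonneg
      (fun k _ => condEnt_term_nonneg (r i) (h i) k)).1 (hterm i (mem_univ i)) k (mem_univ k)
  have hS : r i k + r i k' ≤ ∑ k', r i k' := by
    have : ({k, k'} : Finset κ) ⊆ univ := subset_univ _
    calc r i k + r i k' = ∑ j ∈ ({k, k'} : Finset κ), r i j := by
          rw [Finset.sum_pair hne]
      _ ≤ ∑ k', r i k' := Finset.sum_le_sum_of_subset_of_nonneg this (fun j _ _ => h i j)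
  have hlt : Real.logb 2 (r i k) < Real.logb 2 (∑ k', r i k') :=
    Real.logb_lt_logb (by norm_num) hk (by linarith)
  nlinarith

lemma sum_phi10_of_det {κ : Type*} [Fintype κ] (r : κ → ℝ) (h : ∀ k, 0 ≤ r k)
    (hdet : ∀ k k', 0 < r k → 0 < r k' → k = k') :
    ∑ k, phi10 (r k) = phi10 (∑ k, r k) := by
  by_cases hall : ∀ k, r k = 0
  · simp [hall, phi10_zero]
  · push_neg at hall
    obtain ⟨k0, hk0⟩ := hall
    have hk0' : 0 < r k0 := (h k0).lt_of_ne (Ne.symm hk0)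
    have hz : ∀ k, k ≠ k0 → r k = 0 := by
      intro k hk
      by_contra h'
      exact hk (hdet k k0 ((h k).lt_of_ne (Ne.symm h')) hk0')
    rw [Finset.sum_eq_single k0 (fun k _ hk => by rw [hz k hk, phi10_zero]) (by simp),
        Finset.sum_eq_single k0 (fun k _ hk => hz k hk) (by simp)]

lemma phi10_mul (a b : ℝ) (ha : 0 ≤ a) (hb : 0 ≤ b) :
    phi10 (a * b) = b * phi10 a + a * phi10 b := by
  rcases eq_or_lt_of_le ha with h | h
  · simp [← h, phi10_zero, phi10]
  rcases eq_or_lt_of_le hb with h' | h'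
  · simp [← h', phi10_zero, phi10]
  simp only [phi10, Real.logb_mul h.ne' h'.ne']
  ring

lemma ent_indep {ι κ : Type*} [Fintype ι] [Fintype κ] (a : ι → ℝ) (b : κ → ℝ)
    (ha : ∀ i, 0 ≤ a i) (hb : ∀ k, 0 ≤ b k) (hsa : ∑ i, a i = 1) (hsb : ∑ k, b k = 1) :
    ∑ i, ∑ k, phi10 (a i * b k) = (∑ i, phi10 (a i)) + ∑ k, phi10 (b k) := by
  have h1 : ∀ i, ∑ k, phi10 (a i * b k) = phi10 (a i) + a i * ∑ k, phi10 (b k) := by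
    intro i
    calc ∑ k, phi10 (a i * b k) = ∑ k, (b k * phi10 (a i) + a i * phi10 (b k)) :=
          Finset.sum_congr rfl fun k _ => phi10_mul _ _ (ha i) (hb k)
      _ = (∑ k, b k) * phi10 (a i) + a i * ∑ k, phi10 (b k) := by
          rw [Finset.sum_add_distrib, ← Finset.sum_mul, ← Finset.mul_sum]
      _ = phi10 (a i) + a i * ∑ k, phi10 (b k) := by rw [hsb]; ring
  calc ∑ i, ∑ k, phi10 (a i * b k) = ∑ i, (phi10 (a i) + a i * ∑ k, phi10 (b k)) :=
        Finset.sum_congr rfl fun i _ => h1 i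
    _ = (∑ i, phi10 (a i)) + (∑ i, a i) * ∑ k, phi10 (b k) := by
        rw [Finset.sum_add_distrib, ← Finset.sum_mul]
    _ = _ := by rw [hsa]; ring

section
variable {α β γ ζ : Type*} [Fintype α] [Fintype β] [Fintype γ] [Fintype ζ] [DecidableEq ζ]

lemma core10 (p : α → β → γ → ℝ) (q : ζ → β → γ → ℝ) (f : α → ζ)
    (hnn : ∀ x y u, 0 ≤ p x y u)
    (hq : ∀ z y u, q z y u = ∑ x ∈ Finset.univ.filter (fun x => f x = z), p x y u)
    (hsum' : ∑ x, ∑ y, ∑ u, p x y u = 1)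
    (hmarkov' : ∀ x y u, 0 < ∑ u', q (f x) y u' →
      p x y u * (∑ u', q (f x) y u') = (∑ u', p x y u') * q (f x) y u)
    (hZindep' : ∀ z u, (∑ y, q z y u)
      = (∑ y, ∑ u', q z y u') * (∑ z', ∑ y, q z' y u))
    (hfun' : (∑ z, ∑ y, ∑ u, phi10 (q z y u)) - (∑ z, ∑ u, phi10 (∑ y, q z y u)) = 0) :
    (∑ x, phi10 (∑ u, ∑ y, p x y u)) + (∑ u, phi10 (∑ x, ∑ y, p x y u))
        - (∑ x, ∑ u, phi10 (∑ y, p x y u))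
      = ((∑ x, phi10 (∑ y, ∑ u, p x y u)) + (∑ y, phi10 (∑ x, ∑ u, p x y u))
          - (∑ x, ∑ y, phi10 (∑ u, p x y u)))
        - ((∑ z, phi10 (∑ y, ∑ u, q z y u)) + (∑ y, phi10 (∑ z, ∑ u, q z y u))
          - (∑ z, ∑ y, phi10 (∑ u, q z y u))) := by
  -- basic facts
  have hqnn : ∀ z y u, 0 ≤ q z y u := fun z y u => by
    rw [hq]; exact Finset.sum_nonneg fun x _ => hnn x y u
  have hple : ∀ x y u, p x y u ≤ q (f x) y u := fun x y u => by
    rw [hq]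
    exact Finset.single_le_sum (fun x' _ => hnn x' y u)
      (by simp)
  have hqsum : ∀ y u, ∑ z, q z y u = ∑ x, p x y u := fun y u => by
    simp_rw [hq]
    exact Finset.sum_fiberwise _ _ _
  have hwf : ∀ (F : α → ℝ) (G : ζ → ℝ),
      ∑ x, F x * G (f x) = ∑ z, (∑ x ∈ Finset.univ.filter (fun x => f x = z), F x) * G z := by
    intro F G
    rw [← Finset.sum_fiberwise univ f (fun x => F x * G (f x))]
    refine Finset.sum_congr rfl fun z _ => ?_
    rw [Finset.sum_mul]
    refine Finset.sum_congr rfl fun x hx => ?_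
    rw [(Finset.mem_filter.1 hx).2]
  -- Step A : Markov chain gives H(X,Y,U) - H(X,Y) = H(Z,Y,U) - H(Z,Y)
  have e1 := condEnt_eq (fun w : α × β => fun u => p w.1 w.2 u)
  rw [Fintype.sum_prod_type, Fintype.sum_prod_type, Fintype.sum_prod_type] at e1
  have e2 := condEnt_eq (fun w : ζ × β => fun u => q w.1 w.2 u)
  rw [Fintype.sum_prod_type, Fintype.sum_prod_type, Fintype.sum_prod_type] at e2
  have hR : ∑ x, ∑ y, ∑ u, p x y u *
        (Real.logb 2 (∑ u', p x y u') - Real.logb 2 (p x y u))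
      = ∑ z, ∑ y, ∑ u, q z y u *
        (Real.logb 2 (∑ u', q z y u') - Real.logb 2 (q z y u)) := by
    have hpt : ∀ x y u, p x y u *
          (Real.logb 2 (∑ u', p x y u') - Real.logb 2 (p x y u))
        = p x y u *
          (Real.logb 2 (∑ u', q (f x) y u') - Real.logb 2 (q (f x) y u)) := by
      intro x y u
      rcases eq_or_lt_of_le (hnn x y u) with h0 | hp0
      · rw [← h0]; ring
      have hpxy : 0 < ∑ u', p x y u' :=
        lt_of_lt_of_le hp0 (Finset.single_le_sum (fun u' _ => hnn x y u') (mem_univ u))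
      have hS : 0 < ∑ u', q (f x) y u' :=
        lt_of_lt_of_le hpxy (Finset.sum_le_sum fun u' _ => hple x y u')
      have hm := hmarkov' x y u hS
      have h1 : 0 < (∑ u', p x y u') * q (f x) y u := by
        rw [← hm]; exact mul_pos hp0 hS
      have hq0 : 0 < q (f x) y u := by
        rcases mul_pos_iff.1 h1 with ⟨_, h⟩ | ⟨h, _⟩
        · exact h
        · linarith
      have hlog : Real.logb 2 (p x y u) + Real.logb 2 (∑ u', q (f x) y u')
          = Real.logb 2 (∑ u', p x y u') + Real.logb 2 (q (f x) y u) := by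
        rw [← Real.logb_mul hp0.ne' hS.ne', ← Real.logb_mul hpxy.ne' hq0.ne', hm]
      linear_combination (-(p x y u)) * hlog
    calc ∑ x, ∑ y, ∑ u, p x y u *
          (Real.logb 2 (∑ u', p x y u') - Real.logb 2 (p x y u))
        = ∑ x, ∑ y, ∑ u, p x y u *
          (Real.logb 2 (∑ u', q (f x) y u') - Real.logb 2 (q (f x) y u)) :=
          Finset.sum_congr rfl fun x _ => Finset.sum_congr rfl fun y _ =>
            Finset.sum_congr rfl fun u _ => hpt x y u
      _ = ∑ y, ∑ x, ∑ u, p x y u *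
          (Real.logb 2 (∑ u', q (f x) y u') - Real.logb 2 (q (f x) y u)) :=
          Finset.sum_comm
      _ = ∑ y, ∑ u, ∑ x, p x y u *
          (Real.logb 2 (∑ u', q (f x) y u') - Real.logb 2 (q (f x) y u)) :=
          Finset.sum_congr rfl fun y _ => Finset.sum_comm
      _ = ∑ y, ∑ u, ∑ z, q z y u *
          (Real.logb 2 (∑ u', q z y u') - Real.logb 2 (q z y u)) := by
          refine Finset.sum_congr rfl fun y _ => Finset.sum_congr rfl fun u _ => ?_
          rw [hwf (fun x => p x y u)
            (fun z => Real.logb 2 (∑ u', q z y u') - Real.logb 2 (q z y u))]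
          exact Finset.sum_congr rfl fun z _ => by rw [← hq]
      _ = ∑ y, ∑ z, ∑ u, q z y u *
          (Real.logb 2 (∑ u', q z y u') - Real.logb 2 (q z y u)) :=
          Finset.sum_congr rfl fun y _ => Finset.sum_comm
      _ = ∑ z, ∑ y, ∑ u, q z y u *
          (Real.logb 2 (∑ u', q z y u') - Real.logb 2 (q z y u)) :=
          Finset.sum_comm
  have hA : (∑ x, ∑ y, ∑ u, phi10 (p x y u)) - (∑ x, ∑ y, phi10 (∑ u, p x y u))
      = (∑ z, ∑ y, ∑ u, phi10 (q z y u)) - (∑ z, ∑ y, phi10 (∑ u, q z y u)) :=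
    e1.trans (hR.trans e2.symm)
  -- Step B : determinism of Y given (Z,U)
  have e3 := condEnt_eq (fun w : ζ × γ => fun y => q w.1 y w.2)
  rw [Fintype.sum_prod_type, Fintype.sum_prod_type, Fintype.sum_prod_type] at e3
  have hswap : ∑ z, ∑ y, ∑ u, phi10 (q z y u) = ∑ z, ∑ u, ∑ y, phi10 (q z y u) :=
    Finset.sum_congr rfl fun z _ => Finset.sum_comm
  have hz0 : ∑ w : ζ × γ, ∑ y, q w.1 y w.2 *
      (Real.logb 2 (∑ y', q w.1 y' w.2) - Real.logb 2 (q w.1 y w.2)) = 0 := by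
    rw [Fintype.sum_prod_type, ← e3]
    rw [hswap] at hfun'
    linarith
  have hdetq := det_of_condEnt_zero (fun w : ζ × γ => fun y => q w.1 y w.2)
    (fun w y => hqnn _ _ _) (by rw [Fintype.sum_prod_type] at hz0; rw [Fintype.sum_prod_type]; exact hz0)
  have hdetp : ∀ x u y y', 0 < p x y u → 0 < p x y' u → y = y' := by
    intro x u y y' h1 h2
    exact hdetq (f x, u) y y' (lt_of_lt_of_le h1 (hple x y u))
      (lt_of_lt_of_le h2 (hple x y' u))
  -- Step C : H(X,Y,U) = H(X,U)
  have hC : ∑ x, ∑ u, ∑ y, phi10 (p x y u) = ∑ x, ∑ u, phi10 (∑ y, p x y u) :=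
    Finset.sum_congr rfl fun x _ => Finset.sum_congr rfl fun u _ =>
      sum_phi10_of_det (fun y => p x y u) (fun y => hnn x y u) (hdetp x u)
  -- Step D : independence H(Z,U) = H(Z) + H(U)
  have hsa : ∑ z, ∑ y, ∑ u', q z y u' = 1 := by
    calc ∑ z, ∑ y, ∑ u', q z y u' = ∑ y, ∑ z, ∑ u', q z y u' := Finset.sum_comm
      _ = ∑ y, ∑ u', ∑ z, q z y u' := Finset.sum_congr rfl fun y _ => Finset.sum_comm
      _ = ∑ y, ∑ u', ∑ x, p x y u' :=
          Finset.sum_congr rfl fun y _ => Finset.sum_congr rfl fun u' _ => hqsum y u'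
      _ = ∑ y, ∑ x, ∑ u', p x y u' := Finset.sum_congr rfl fun y _ => Finset.sum_comm
      _ = ∑ x, ∑ y, ∑ u', p x y u' := Finset.sum_comm
      _ = 1 := hsum'
  have hsb : ∑ u, ∑ z, ∑ y, q z y u = 1 := by
    calc ∑ u, ∑ z, ∑ y, q z y u = ∑ z, ∑ u, ∑ y, q z y u := Finset.sum_comm
      _ = ∑ z, ∑ y, ∑ u, q z y u := Finset.sum_congr rfl fun z _ => Finset.sum_comm
      _ = 1 := hsa
  have hD : ∑ z, ∑ u, phi10 (∑ y, q z y u)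
      = (∑ z, phi10 (∑ y, ∑ u', q z y u')) + ∑ u, phi10 (∑ z, ∑ y, q z y u) := by
    calc ∑ z, ∑ u, phi10 (∑ y, q z y u)
        = ∑ z, ∑ u, phi10 ((∑ y, ∑ u', q z y u') * (∑ z', ∑ y, q z' y u)) := by
          exact Finset.sum_congr rfl fun z _ => Finset.sum_congr rfl fun u _ => by
            rw [hZindep' z u]
      _ = _ := ent_indep _ _
            (fun z => Finset.sum_nonneg fun y _ => Finset.sum_nonneg fun u' _ => hqnn z y u')
            (fun u => Finset.sum_nonneg fun z _ => Finset.sum_nonneg fun y _ => hqnn z y u)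
            hsa hsb
  -- marginal identifications
  have hT1 : ∑ x, phi10 (∑ u, ∑ y, p x y u) = ∑ x, phi10 (∑ y, ∑ u, p x y u) :=
    Finset.sum_congr rfl fun x _ => by rw [Finset.sum_comm]
  have hT7 : ∑ y, phi10 (∑ z, ∑ u, q z y u) = ∑ y, phi10 (∑ x, ∑ u, p x y u) := by
    refine Finset.sum_congr rfl fun y _ => ?_
    congr 1
    calc ∑ z, ∑ u, q z y u = ∑ u, ∑ z, q z y u := Finset.sum_comm
      _ = ∑ u, ∑ x, p x y u := Finset.sum_congr rfl fun u _ => hqsum y u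
      _ = ∑ x, ∑ u, p x y u := Finset.sum_comm
  have hTb : ∑ u, phi10 (∑ z, ∑ y, q z y u) = ∑ u, phi10 (∑ x, ∑ y, p x y u) := by
    refine Finset.sum_congr rfl fun u _ => ?_
    congr 1
    calc ∑ z, ∑ y, q z y u = ∑ y, ∑ z, q z y u := Finset.sum_comm
      _ = ∑ y, ∑ x, p x y u := Finset.sum_congr rfl fun y _ => hqsum y u
      _ = ∑ x, ∑ y, p x y u := Finset.sum_comm
  have hP3 : ∑ x, ∑ y, ∑ u, phi10 (p x y u) = ∑ x, ∑ u, ∑ y, phi10 (p x y u) :=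
    Finset.sum_congr rfl fun x _ => Finset.sum_comm
  rw [hswap] at hfun'
  linarith [hA, hC, hD, hT1, hT7, hTb, hP3, hfun']
end


/-- If `Z = f(X)`, `X - (Z,Y) - U` is a Markov chain, `Z ⟂ U`, and `H(Y|Z,U) = 0`,
then `I(X;U) = I(X;Y) - I(Z;Y)`. -/
theorem stmt10 {α β γ ζ : Type*} [Fintype α] [Fintype β] [Fintype γ] [Fintype ζ]
    [DecidableEq ζ]
    (p : α × β × γ → ℝ) (hnn : ∀ w, 0 ≤ p w) (hsum : ∑ w, p w = 1)
    (f : α → ζ)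
    (hmarkov : ∀ (x : α) (y : β) (u : γ),
      0 < ∑ u', zjoint p f (f x, y, u') →
      p (x, y, u) * (∑ u', zjoint p f (f x, y, u'))
        = (∑ u', p (x, y, u')) * zjoint p f (f x, y, u))
    (hZindep : ∀ (z : ζ) (u : γ),
      (∑ y, zjoint p f (z, y, u))
        = (∑ y, ∑ u', zjoint p f (z, y, u')) * (∑ z', ∑ y, zjoint p f (z', y, u)))
    (hfun : ent (zjoint p f)
        - ent (fun w : ζ × γ => ∑ y, zjoint p f (w.1, y, w.2)) = 0) :
    mi (fun w : α × γ => ∑ y, p (w.1, y, w.2))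
      = mi (fun w : α × β => ∑ u, p (w.1, w.2, u))
        - mi (fun w : ζ × β => ∑ u, zjoint p f (w.1, w.2, u)) := by
  have key := core10 (fun x y u => p (x, y, u)) (fun z y u => zjoint p f (z, y, u)) f
    (fun x y u => hnn _) (fun z y u => rfl)
    (by simpa [Fintype.sum_prod_type] using hsum)
    (fun x y u h => hmarkov x y u h)
    (fun z u => hZindep z u)
    (by simpa [ent, zjoint, phi10, Fintype.sum_prod_type] using hfun)
  simpa [mi, ent, zjoint, phi10, Fintype.sum_prod_type] using key
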